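/- For any A ∈ ℝⁿˣⁿ, the minimum of ‖A - L‖₁ over all graph Laplacians L with support in E equals ‖A - Π(A)‖₁ + Σᵢ |Σⱼ Π(A)ᵢⱼ|, where Π(A) is the entrywise projection of A onto matrices with nonnegative diagonal, nonpositive off-diagonal entries, and zero off-diagonal entries outside E. -/

import Mathlib

/-!
Every `Π(A)ᵢⱼ` lies between `Aᵢⱼ` and `Lᵢⱼ` for any `L` with the Laplacian sign pattern, so
`‖A - L‖₁ = ‖A - Π(A)‖₁ + ‖Π(A) - L‖₁` and it remains to minimise `‖Π(A) - L‖₁` row by row.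
If `L` has zero row sums, the triangle inequality bounds the cost of row `i` below by `|sᵢ|`,
`sᵢ = ∑ⱼ Π(A)ᵢⱼ`. The bound is attained by lowering the diagonal entry by `sᵢ` when `sᵢ ≥ 0`, and
by scaling the off-diagonal entries by `Π(A)ᵢᵢ / (Π(A)ᵢᵢ - sᵢ) ∈ [0, 1]` when `sᵢ < 0`.
-/

open Finset

section Entry

variable {α : Type*} [AddCommGroup α] [LinearOrder α] [IsOrderedAddMonoid α] {a l : α}

lemma abs_sub_eq_abs_sub_max_add (hl : 0 ≤ l) : |a - l| = |a - max a 0| + |max a 0 - l| := by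
  rcases le_total 0 a with h | h
  · simp [max_eq_left h]
  · rw [max_eq_right h, sub_zero, zero_sub, abs_neg, abs_of_nonpos h, abs_of_nonneg hl,
      abs_of_nonpos (sub_nonpos.2 (h.trans hl))]
    abel

lemma abs_sub_eq_abs_sub_min_add (hl : l ≤ 0) : |a - l| = |a - min a 0| + |min a 0 - l| := by
  rcases le_total a 0 with h | h
  · simp [min_eq_left h]
  · rw [min_eq_right h, sub_zero, zero_sub, abs_neg, abs_of_nonneg h, abs_of_nonpos hl,
      abs_of_nonneg (sub_nonneg.2 (hl.trans h))]
    abel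

end Entry

section Row

variable {ι R : Type*} [Fintype ι] [DecidableEq ι] [Field R] [LinearOrder R]

def rowBalance (p : ι → R) (i : ι) : ι → R :=
  if 0 ≤ ∑ j, p j then Function.update p i (p i - ∑ j, p j)
  else Function.update ((p i / (p i - ∑ j, p j)) • p) i (p i)

def balanceRows (P : Matrix ι ι R) : Matrix ι ι R :=
  Matrix.of fun i => rowBalance (P i) i

variable {p : ι → R} {i j : ι}

lemma rowBalance_of_ne (hij : i ≠ j) :
    rowBalance p i j = if 0 ≤ ∑ k, p k then p j else p i / (p i - ∑ k, p k) * p j := by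
  unfold rowBalance
  split_ifs <;> simp [Function.update_of_ne hij.symm]

lemma rowBalance_eq_zero (hij : i ≠ j) (hp : p j = 0) : rowBalance p i j = 0 := by
  rw [rowBalance_of_ne hij, hp]
  simp

variable [IsStrictOrderedRing R]

lemma sum_le_apply_of_nonpos_of_ne (ho : ∀ j, i ≠ j → p j ≤ 0) : ∑ j, p j ≤ p i := by
  rw [← add_sum_erase _ _ (mem_univ i)]
  have : ∑ j ∈ univ.erase i, p j ≤ 0 := sum_nonpos fun j hj => ho j (ne_of_mem_erase hj).symm
  linarith

lemma sum_rowBalance (hd : 0 ≤ p i) (ho : ∀ j, i ≠ j → p j ≤ 0) :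
    ∑ j, rowBalance p i j = 0 := by
  have hs := sum_le_apply_of_nonpos_of_ne ho
  rw [← add_sum_erase _ _ (mem_univ i),
    sum_congr rfl fun j hj => rowBalance_of_ne (ne_of_mem_erase hj).symm]
  by_cases h : 0 ≤ ∑ j, p j
  · simp only [rowBalance, if_pos h, Function.update_self]
    rw [sum_erase_eq_sub (mem_univ i)]
    ring
  · have hden : 0 < p i - ∑ j, p j := by linarith
    simp only [rowBalance, if_neg h, Function.update_self]
    rw [← mul_sum, sum_erase_eq_sub (mem_univ i)]
    field_simp
    ring

lemma rowBalance_self_nonneg (hd : 0 ≤ p i) (ho : ∀ j, i ≠ j → p j ≤ 0) :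
    0 ≤ rowBalance p i i := by
  unfold rowBalance
  split_ifs with h
  · simpa using sum_le_apply_of_nonpos_of_ne ho
  · simpa using hd

lemma rowBalance_nonpos (hd : 0 ≤ p i) (ho : ∀ j, i ≠ j → p j ≤ 0) (hij : i ≠ j) :
    rowBalance p i j ≤ 0 := by
  rw [rowBalance_of_ne hij]
  split_ifs with h
  · exact ho j hij
  · have hden : 0 < p i - ∑ k, p k := by linarith [sum_le_apply_of_nonpos_of_ne ho]
    exact mul_nonpos_of_nonneg_of_nonpos (div_nonneg hd hden.le) (ho j hij)

lemma sum_abs_sub_rowBalance (hd : 0 ≤ p i) (ho : ∀ j, i ≠ j → p j ≤ 0) :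
    ∑ j, |p j - rowBalance p i j| = |∑ j, p j| := by
  have hs := sum_le_apply_of_nonpos_of_ne ho
  by_cases h : 0 ≤ ∑ j, p j
  · rw [sum_eq_single i
      (fun j _ hj => by rw [rowBalance_of_ne hj.symm, if_pos h, sub_self, abs_zero]) (by simp)]
    simp [rowBalance, h, abs_of_nonneg h]
  · have hden : 0 < p i - ∑ k, p k := by linarith
    have ht : p i / (p i - ∑ k, p k) ≤ 1 := (div_le_one hden).2 (by linarith)
    have hoff : ∀ j ∈ univ.erase i,
        |p j - rowBalance p i j| = (1 - p i / (p i - ∑ k, p k)) * -p j := by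
      intro j hj
      have hij := (ne_of_mem_erase hj).symm
      rw [rowBalance_of_ne hij, if_neg h, abs_of_nonpos (by nlinarith [ho j hij])]
      ring
    rw [← add_sum_erase _ _ (mem_univ i), sum_congr rfl hoff, ← mul_sum, sum_neg_distrib,
      sum_erase_eq_sub (mem_univ i), abs_of_neg (not_le.1 h)]
    simp only [rowBalance, if_neg h, Function.update_self, sub_self, abs_zero]
    field_simp
    ring

end Row

lemma Matrix.mulVec_one_eq_zero_iff {ι R : Type*} [Fintype ι] [NonAssocSemiring R]
    {L : Matrix ι ι R} : L.mulVec (fun _ => 1) = 0 ↔ ∀ i, ∑ j, L i j = 0 := by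
  simp [funext_iff, Matrix.mulVec, dotProduct]

section SignPattern

variable {ι R : Type*} [Zero R] [LinearOrder R] (E : Finset (ι × ι))

structure IsSignPattern (L : Matrix ι ι R) : Prop where
  diag_nonneg : ∀ i, 0 ≤ L i i
  offDiag_nonpos : ∀ i j, i ≠ j → L i j ≤ 0
  eq_zero_of_notMem : ∀ i j, i ≠ j → (i, j) ∉ E → L i j = 0

variable [DecidableEq ι]

def signProj (A : Matrix ι ι R) : Matrix ι ι R :=
  Matrix.of fun i j => if i = j then max (A i i) 0 else if (i, j) ∈ E then min (A i j) 0 else 0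

lemma isSignPattern_signProj (A : Matrix ι ι R) : IsSignPattern E (signProj E A) where
  diag_nonneg i := by simp [signProj]
  offDiag_nonpos i j h := by
    simp only [signProj, Matrix.of_apply, if_neg h]
    split_ifs
    exacts [min_le_right _ _, le_rfl]
  eq_zero_of_notMem i j h hE := by simp [signProj, h, hE]

end SignPattern

section Distance

variable {ι R : Type*} [Field R] [LinearOrder R] [IsStrictOrderedRing R] {E : Finset (ι × ι)}

lemma sum_abs_rowSum_le [Fintype ι] {L : Matrix ι ι R} (hL : ∀ i, ∑ j, L i j = 0)
    (P : Matrix ι ι R) : ∑ i, |∑ j, P i j| ≤ ∑ i, ∑ j, |P i j - L i j| := by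
  refine sum_le_sum fun i _ => ?_
  calc |∑ j, P i j| = |∑ j, (P i j - L i j)| := by rw [sum_sub_distrib, hL i, sub_zero]
    _ ≤ ∑ j, |P i j - L i j| := abs_sum_le_sum_abs _ _

variable [DecidableEq ι]

lemma IsSignPattern.abs_sub_eq_abs_sub_signProj_add {L : Matrix ι ι R} (hL : IsSignPattern E L)
    (A : Matrix ι ι R) (i j : ι) :
    |A i j - L i j| = |A i j - signProj E A i j| + |signProj E A i j - L i j| := by
  simp only [signProj, Matrix.of_apply]
  split_ifs with hij hE
  · subst hij
    exact abs_sub_eq_abs_sub_max_add (hL.diag_nonneg i)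
  · exact abs_sub_eq_abs_sub_min_add (hL.offDiag_nonpos i j hij)
  · simp [hL.eq_zero_of_notMem i j hij hE]

variable [Fintype ι]

lemma IsSignPattern.sum_abs_sub_eq {L : Matrix ι ι R} (hL : IsSignPattern E L)
    (A : Matrix ι ι R) :
    ∑ i, ∑ j, |A i j - L i j| =
      ∑ i, ∑ j, |A i j - signProj E A i j| + ∑ i, ∑ j, |signProj E A i j - L i j| := by
  simp only [hL.abs_sub_eq_abs_sub_signProj_add A, sum_add_distrib]

variable {P : Matrix ι ι R}

lemma IsSignPattern.isSignPattern_balanceRows (hP : IsSignPattern E P) :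
    IsSignPattern E (balanceRows P) where
  diag_nonneg i := rowBalance_self_nonneg (hP.diag_nonneg i) (hP.offDiag_nonpos i)
  offDiag_nonpos i _ h := rowBalance_nonpos (hP.diag_nonneg i) (hP.offDiag_nonpos i) h
  eq_zero_of_notMem i j h hE := rowBalance_eq_zero h (hP.eq_zero_of_notMem i j h hE)

lemma IsSignPattern.sum_balanceRows (hP : IsSignPattern E P) (i : ι) :
    ∑ j, balanceRows P i j = 0 :=
  sum_rowBalance (hP.diag_nonneg i) (hP.offDiag_nonpos i)

lemma IsSignPattern.sum_abs_sub_balanceRows (hP : IsSignPattern E P) :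
    ∑ i, ∑ j, |P i j - balanceRows P i j| = ∑ i, |∑ j, P i j| :=
  sum_congr rfl fun i _ => sum_abs_sub_rowBalance (hP.diag_nonneg i) (hP.offDiag_nonpos i)

end Distance

theorem stmt_19_general (n : ℕ) (A : Matrix (Fin n) (Fin n) ℝ)
    (E : Finset (Fin n × Fin n))
    (P : Matrix (Fin n) (Fin n) ℝ)
    (hP : ∀ i j, P i j =
      if i = j then max (A i i) 0 else if (i, j) ∈ E then min (A i j) 0 else 0) :
    IsLeast {c : ℝ | ∃ L : Matrix (Fin n) (Fin n) ℝ,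
        L.mulVec (fun _ => 1) = 0 ∧ (∀ i, 0 ≤ L i i) ∧
        (∀ i j, i ≠ j → L i j ≤ 0) ∧ (∀ i j, i ≠ j → (i, j) ∉ E → L i j = 0) ∧
        c = ∑ i, ∑ j, |A i j - L i j|}
      ((∑ i, ∑ j, |A i j - P i j|) + ∑ i, |∑ j, P i j|) := by
  obtain rfl : P = signProj E A := Matrix.ext hP
  have hP := isSignPattern_signProj E A
  have hL := hP.isSignPattern_balanceRows
  refine ⟨⟨balanceRows (signProj E A), Matrix.mulVec_one_eq_zero_iff.2 hP.sum_balanceRows,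
    hL.diag_nonneg, hL.offDiag_nonpos, hL.eq_zero_of_notMem, ?_⟩, ?_⟩
  · rw [hL.sum_abs_sub_eq, hP.sum_abs_sub_balanceRows]
  · rintro c ⟨L, hL1, hd, ho, hz, rfl⟩
    rw [IsSignPattern.sum_abs_sub_eq ⟨hd, ho, hz⟩]
    exact add_le_add_right (sum_abs_rowSum_le (Matrix.mulVec_one_eq_zero_iff.1 hL1) _) _

/-- The minimum of `‖A - L‖₁` over all graph Laplacians `L` with support in `E`
equals `‖A - Π(A)‖₁ + ∑ i, |∑ j, Π(A)ᵢⱼ|`. -/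
theorem stmt_19 (n : ℕ) (A : Matrix (Fin n) (Fin n) ℝ)
    (E : Finset (Fin n × Fin n)) (hE : ∀ p ∈ E, p.1 ≠ p.2)
    (P : Matrix (Fin n) (Fin n) ℝ)
    (hP : ∀ i j, P i j =
      if i = j then max (A i i) 0 else if (i, j) ∈ E then min (A i j) 0 else 0) :
    IsLeast {c : ℝ | ∃ L : Matrix (Fin n) (Fin n) ℝ,
        L.mulVec (fun _ => 1) = 0 ∧ (∀ i, 0 ≤ L i i) ∧
        (∀ i j, i ≠ j → L i j ≤ 0) ∧ (∀ i j, i ≠ j → (i, j) ∉ E → L i j = 0) ∧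
        c = ∑ i, ∑ j, |A i j - L i j|}
      ((∑ i, ∑ j, |A i j - P i j|) + ∑ i, |∑ j, P i j|) :=
  stmt_19_general n A E P hP
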